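/- Let n = 2m and K_n have probability mass function p(r) = 2^{-(2m-r)}·C(2m-r, m) for r = 0,...,m. Then for every r, P(K_n = r) ≤ sqrt(2)/sqrt(π m) = 2/sqrt(π n). -/

import Mathlib

/-!
Since `C(n + 1, k) / C(n, k) = (n + 1) / (n + 1 - k) ≥ 2` as long as
`n + 1 ≤ 2k`, the sequence `n ↦ C(n, k) / 2^n` increases up to `n = 2k`; hence every
`returnsPMF m r` is at most the central term `C(2m, m) / 4^m`. Wallis' lower bound
`(2m+1)/(2m+2) · π/2 ≤ W m = 16^m / (C(2m, m)^2 (2m+1))` gives `C(2m, m) / 4^m ≤ 1 / √(π m)`.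
-/

/-- The pmf of the number of returns to the origin of simple random walk up to time `2m`:
`p r = 2^{-(2m-r)} * C(2m-r, m)`. -/
noncomputable def returnsPMF (m r : ℕ) : ℝ := (Nat.choose (2*m - r) m : ℝ) / 2^(2*m - r)

open Real Nat

theorem Nat.two_mul_choose_le_choose_succ {n k : ℕ} (h : n + 1 ≤ 2 * k) :
    2 * n.choose k ≤ (n + 1).choose k := by
  rcases lt_or_ge n k with hnk | hkn
  · simp [Nat.choose_eq_zero_of_lt hnk]
  · refine Nat.le_of_mul_le_mul_right ?_ (by omega : 0 < n + 1 - k)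
    calc 2 * n.choose k * (n + 1 - k) ≤ n.choose k * (n + 1) := by
          rw [mul_comm 2, mul_assoc]; gcongr; omega
      _ = (n + 1).choose k * (n + 1 - k) := Nat.choose_mul_succ_eq n k

theorem Nat.choose_div_two_pow_monotoneOn (k : ℕ) :
    MonotoneOn (fun n : ℕ => (n.choose k : ℝ) / 2 ^ n) (Set.Iic (2 * k)) := by
  refine monotoneOn_of_le_succ Set.ordConnected_Iic fun n _ _ hn => ?_
  simp only [Order.succ_eq_add_one, Set.mem_Iic] at hn ⊢
  have h : (2 * n.choose k : ℝ) ≤ (n + 1).choose k := by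
    exact_mod_cast Nat.two_mul_choose_le_choose_succ hn
  rw [div_le_div_iff₀ (by positivity) (by positivity), pow_succ]
  nlinarith [pow_pos (two_pos : (0:ℝ) < 2) n]

theorem Nat.centralBinom_div_four_pow_le {n : ℕ} (hn : n ≠ 0) :
    (centralBinom n : ℝ) / 4 ^ n ≤ 1 / √(π * n) := by
  have hc : (0 : ℝ) < centralBinom n := by exact_mod_cast centralBinom_pos n
  have hfact : (centralBinom n : ℝ) * (n ! : ℝ) ^ 2 = (2 * n)! := by
    have := Nat.choose_mul_factorial_mul_factorial (show n ≤ 2 * n by omega)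
    rw [show 2 * n - n = n by omega] at this
    rw [centralBinom_eq_two_mul_choose, sq, ← mul_assoc]
    exact_mod_cast this
  have hW : Real.Wallis.W n = 16 ^ n / ((centralBinom n : ℝ) ^ 2 * (2 * n + 1)) := by
    rw [Real.Wallis.W_eq_factorial_ratio, ← hfact, pow_mul]
    have : (n ! : ℝ) ≠ 0 := by positivity
    field_simp
    norm_num
  have hsq : (centralBinom n : ℝ) ^ 2 * (π * n) ≤ 16 ^ n := by
    have h := Real.Wallis.le_W n
    rw [hW, le_div_iff₀ (by positivity)] at h
    refine le_trans ?_ h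
    have hn' : (0 : ℝ) < n := by exact_mod_cast Nat.pos_of_ne_zero hn
    rw [div_mul_eq_mul_div, div_mul_eq_mul_div, le_div_iff₀ (by positivity)]
    -- `4n(n+1) ≤ (2n+1)^2`
    nlinarith [mul_pos (pow_pos hc 2) pi_pos]
  have hpin : 0 < π * n := by positivity
  rw [← sqrt_sq (by positivity : 0 ≤ (centralBinom n : ℝ) / 4 ^ n), one_div, ← sqrt_inv]
  refine Real.sqrt_le_sqrt ?_
  rw [div_pow, ← pow_mul, show (4 : ℝ) ^ (n * 2) = 16 ^ n by rw [pow_mul']; norm_num,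
    div_le_iff₀ (by positivity), inv_mul_eq_div, le_div_iff₀ hpin]
  exact hsq

theorem returnsPMF_le_centralBinom_div_four_pow (m r : ℕ) :
    returnsPMF m r ≤ (centralBinom m : ℝ) / 4 ^ m := by
  have h := Nat.choose_div_two_pow_monotoneOn m (by simp : 2 * m - r ∈ Set.Iic (2 * m))
    (Set.mem_Iic.2 le_rfl) (Nat.sub_le _ _)
  simpa [returnsPMF, centralBinom_eq_two_mul_choose, pow_mul, show (2 : ℝ) ^ 2 = 4 by norm_num]
    using h

theorem stmt17 (m : ℕ) (hm : 0 < m) :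
    (∀ r : ℕ, r ≤ m → returnsPMF m r ≤ Real.sqrt 2 / Real.sqrt (Real.pi * m)) ∧
    Real.sqrt 2 / Real.sqrt (Real.pi * m) = 2 / Real.sqrt (Real.pi * (2*m)) := by
  refine ⟨fun r _ => ?_, ?_⟩
  · calc returnsPMF m r ≤ (centralBinom m : ℝ) / 4 ^ m :=
          returnsPMF_le_centralBinom_div_four_pow m r
      _ ≤ 1 / √(π * m) := Nat.centralBinom_div_four_pow_le hm.ne'
      _ ≤ √2 / √(π * m) := by gcongr; exact one_le_sqrt.mpr one_le_two
  · rw [show π * (2 * m) = 2 * (π * m) by ring, sqrt_mul zero_le_two, ← div_div, div_sqrt]
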